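/- arXiv:1612.08838 — 2 statements merged into one kernel-verified Lean document; each statement's English description precedes it below -/
import Mathlib

section
/- If X is a pseudocompact countably κ-metrizable space, then its Čech–Stone compactification βX is κ-metrizable; the κ-metric is given by ψ(p, F') = ρ̄(p, F'∩X), the continuous extension to βX of ρ(·, F'∩X). -/
open Set Topology

section Defs

variable {X : Type*}

/-- A set is regular closed if it equals the closure of its interior. -/
def IsRegClosed [TopologicalSpace X] (C : Set X) : Prop := closure (interior C) = C

/-- A set is regular open if it equals the interior of its closure. -/
def IsRegOpen [TopologicalSpace X] (V : Set X) : Prop := interior (closure V) = V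

/-- A countable κ-metric: axioms (K1)-(K3) and (K4_ω). -/
structure IsCountKappaMetric [TopologicalSpace X] (ρ : X → Set X → ℝ) : Prop where
  nonneg : ∀ x C, IsRegClosed C → 0 ≤ ρ x C
  k1 : ∀ x C, IsRegClosed C → (ρ x C = 0 ↔ x ∈ C)
  k2 : ∀ x C D, IsRegClosed C → IsRegClosed D → C ⊆ D → ρ x D ≤ ρ x C
  k3 : ∀ C, IsRegClosed C → Continuous fun x => ρ x C
  k4omega : ∀ C : ℕ → Set X, (∀ n, IsRegClosed (C n)) → (∀ n, C n ⊆ C (n + 1)) →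
    ∀ x, ρ x (closure (⋃ n, C n)) = ⨅ n, ρ x (C n)

/-- Axiom (K4): the infimum identity for arbitrary nonempty totally ordered
(by inclusion) families of regular closed sets. -/
def K4Chains [TopologicalSpace X] (ρ : X → Set X → ℝ) : Prop :=
  ∀ 𝒞 : Set (Set X), 𝒞.Nonempty → (∀ C ∈ 𝒞, IsRegClosed C) →
    (∀ C ∈ 𝒞, ∀ D ∈ 𝒞, C ⊆ D ∨ D ⊆ C) →
    ∀ x, ρ x (closure (⋃₀ 𝒞)) = sInf ((ρ x) '' 𝒞)

/-- A (full) κ-metric: axioms (K1)-(K4). -/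
structure IsKappaMetric [TopologicalSpace X] (ρ : X → Set X → ℝ)
    extends IsCountKappaMetric ρ : Prop where
  k4 : K4Chains ρ

/-- Countable chain condition. -/
def CCCSpace (X : Type*) [TopologicalSpace X] : Prop :=
  ∀ 𝒪 : Set (Set X), (∀ U ∈ 𝒪, IsOpen U ∧ U.Nonempty) →
    𝒪.PairwiseDisjoint id → 𝒪.Countable

/-- Pseudocompactness: every continuous real-valued function is bounded. -/
def Pseudocompact (X : Type*) [TopologicalSpace X] : Prop :=
  ∀ f : X → ℝ, Continuous f → ∃ M, ∀ x, |f x| ≤ M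

/-- d-open maps. -/
def IsDOpen {Y : Type*} [TopologicalSpace X] [TopologicalSpace Y] (f : X → Y) : Prop :=
  ∀ U : Set X, IsOpen U → f '' U ⊆ interior (closure (f '' U))

/-- Q-admissible families of regular open sets with respect to ρ. -/
def QAdmissible [TopologicalSpace X] (ρ : X → Set X → ℝ) (P : Set (Set X)) : Prop :=
  (∀ V ∈ P, IsRegOpen V) ∧
  (∀ V ∈ P, ∀ q : ℚ,
    interior ((fun x => ρ x (closure V)) ⁻¹' Iic (q : ℝ)) ∈ P ∧
    interior ((fun x => ρ x (closure V)) ⁻¹' Ici (q : ℝ)) ∈ P) ∧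
  (∀ V ∈ P, interior Vᶜ ∈ P) ∧
  (∀ U ∈ P, ∀ V ∈ P, U ∩ V ∈ P ∧ interior (closure (U ∪ V)) ∈ P)

/-- The equivalence relation ∼_P. -/
def pSetoid (P : Set (Set X)) : Setoid X where
  r x y := ∀ V ∈ P, (x ∈ V ↔ y ∈ V)
  iseqv := ⟨fun _ _ _ => Iff.rfl, fun h V hV => (h V hV).symm,
    fun h1 h2 V hV => (h1 V hV).trans (h2 V hV)⟩

/-- The quotient X_P. -/
def XP (P : Set (Set X)) : Type _ := Quotient (pSetoid P)

/-- The quotient map q : X → X_P. -/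
def qP (P : Set (Set X)) : X → XP P := Quotient.mk (pSetoid P)

/-- The topology on X_P generated by images of members of P. -/
def topXP [TopologicalSpace X] (P : Set (Set X)) : TopologicalSpace (XP P) :=
  TopologicalSpace.generateFrom ((fun V => qP P '' V) '' P)

end Defs

section Aux

open Filter Function

variable {X : Type*} [TopologicalSpace X]

lemma IsRegClosed.isClosed' {C : Set X} (h : IsRegClosed C) : IsClosed C :=
  h ▸ isClosed_closure

lemma isRegClosed_closure {U : Set X} (hU : IsOpen U) : IsRegClosed (closure U) :=
  subset_antisymm (closure_minimal interior_subset isClosed_closure)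
    (closure_mono (interior_maximal subset_closure hU))

omit [TopologicalSpace X] in
lemma denseRange_closure_inter {Y : Type*} [TopologicalSpace Y] {e : X → Y}
    (he : DenseRange e) {U : Set Y} (hU : IsOpen U) :
    closure (U ∩ Set.range e) = closure U := by
  refine subset_antisymm (closure_mono inter_subset_left) fun y hy => ?_
  rw [mem_closure_iff] at hy ⊢
  intro o ho hyo
  obtain ⟨z, hz⟩ := hy o ho hyo
  obtain ⟨a, ha⟩ := he.exists_mem_open (ho.inter hU) ⟨z, hz⟩
  exact ⟨e a, ha.1, ha.2, ⟨a, rfl⟩⟩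

/-- Cluster point of a sequence of nonempty open sets in a pseudocompact
completely regular space. -/
lemma cluster_point_of_opens [T35Space X]
    (hpc : Pseudocompact X) (V : ℕ → Set X) (hVo : ∀ n, IsOpen (V n))
    (hVne : ∀ n, (V n).Nonempty) :
    ∃ x : X, ∀ N : Set X, N ∈ 𝓝 x → ∀ k : ℕ, ∃ n, k ≤ n ∧ (N ∩ V n).Nonempty := by
  by_contra hcon
  push_neg at hcon
  -- the family is locally finite
  have hlf : LocallyFinite V := by
    intro x
    obtain ⟨N, hN, k, hk⟩ := hcon x
    refine ⟨N, hN, ((finite_Iio k).subset ?_)⟩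
    intro n hn
    by_contra hnk
    have : k ≤ n := le_of_not_gt hnk
    obtain ⟨y, hy⟩ := hn
    have hne : (N ∩ V n).Nonempty := ⟨y, hy.2, hy.1⟩
    rw [hk n this] at hne
    exact hne.ne_empty rfl
  choose pt hpt using hVne
  -- bump functions
  have hbump : ∀ n : ℕ, ∃ g : X → ℝ, Continuous g ∧ (∀ y, 0 ≤ g y) ∧
      g (pt n) = (n : ℝ) ∧ ∀ y ∉ V n, g y = 0 := by
    intro n
    obtain ⟨f, hfc, hfx, hfK⟩ := CompletelyRegularSpace.completely_regular (pt n) (V n)ᶜ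
      (hVo n).isClosed_compl (by simp [hpt n])
    refine ⟨fun y => (n : ℝ) * (1 - (f y : ℝ)), by fun_prop, fun y => ?_, ?_, fun y hy => ?_⟩
    · have h1 : (f y : ℝ) ≤ 1 := (f y).2.2
      have h0 : (0:ℝ) ≤ 1 - (f y : ℝ) := by linarith
      exact mul_nonneg (Nat.cast_nonneg n) h0
    · simp [hfx]
    · have : f y = 1 := hfK hy
      simp [this]
  choose g hgc hgnn hgpt hg0 using hbump
  have hsupp : ∀ n, support (g n) ⊆ V n := by
    intro n y hy
    by_contra h
    exact hy (hg0 n y h)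
  have hlf' : LocallyFinite fun n => support (g n) := hlf.subset hsupp
  have hFc : Continuous fun x => ∑ᶠ n, g n x := continuous_finsum hgc hlf'
  obtain ⟨M, hM⟩ := hpc _ hFc
  set n := ⌈M⌉₊ + 1 with hn
  have h1 : (n : ℝ) ≤ ∑ᶠ m, g m (pt n) := by
    have hfin : (support fun m => g m (pt n)).Finite :=
      (hlf'.point_finite (pt n)).subset fun m hm => hm
    have := single_le_finsum n hfin (fun j => hgnn j (pt n))
    simpa [hgpt n] using this
  have h2 : ∑ᶠ m, g m (pt n) ≤ M := (abs_le.mp (hM (pt n))).2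
  have h3 : M < (n : ℝ) := by
    have := Nat.le_ceil M
    have h4 : ((⌈M⌉₊ : ℝ)) < (n : ℝ) := by exact_mod_cast Nat.lt_succ_self _
    linarith
  linarith

/-- A pseudocompact space with a countable κ-metric satisfies the countable
chain condition. -/
lemma ccc_of_pseudocompact [T35Space X] (hpc : Pseudocompact X)
    (ρ : X → Set X → ℝ) (hρ : IsCountKappaMetric ρ) : CCCSpace X := by
  classical
  intro 𝒪 h𝒪 hdisj
  by_contra hunc
  set T := ↥𝒪 with hT
  letI r : T → T → Prop := WellOrderingRel
  haveI : IsWellOrder T r := WellOrderingRel.isWellOrder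
  have wf : WellFounded r := (IsWellFounded.wf : WellFounded r)
  -- pick a point in each member
  have hptex : ∀ U : T, (U : Set X).Nonempty := fun U => (h𝒪 U U.2).2
  choose pt hpt using hptex
  have hopen : ∀ U : T, IsOpen (U : Set X) := fun U => (h𝒪 U U.2).1
  -- predecessors
  set pred : T → Set X := fun U => ⋃ V ∈ {V : T | r V U}, (V : Set X) with hpred
  have hpredopen : ∀ U, IsOpen (pred U) :=
    fun U => isOpen_biUnion fun V _ => hopen V
  set C : T → Set X := fun U => closure (pred U) with hC
  have hCreg : ∀ U, IsRegClosed (C U) := fun U => isRegClosed_closure (hpredopen U)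
  -- each point avoids the closure of the predecessors
  have hdisj' : ∀ U : T, (U : Set X) ∩ C U = ∅ := by
    intro U
    have h1 : (U : Set X) ∩ pred U = ∅ := by
      rw [eq_empty_iff_forall_notMem]
      rintro y ⟨hyU, hyP⟩
      obtain ⟨V, hV⟩ := mem_iUnion.mp hyP
      obtain ⟨hrV, hyV⟩ := by simpa using hV
      have hne : (V : Set X) ≠ (U : Set X) := by
        intro h
        have : V = U := Subtype.coe_injective h
        subst this
        exact (irrefl_of r V) hrV
      exact (hdisj V.2 U.2 hne).ne_of_mem hyV hyU rfl
    have h2 : (U : Set X) ∩ C U ⊆ closure ((U : Set X) ∩ pred U) :=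
      (hopen U).inter_closure
    rw [h1, closure_empty] at h2
    exact subset_antisymm h2 (empty_subset _)
  have htpos : ∀ U : T, 0 < ρ (pt U) (C U) := by
    intro U
    rcases lt_or_eq_of_le (hρ.nonneg (pt U) (C U) (hCreg U)) with h | h
    · exact h
    · exfalso
      have : pt U ∈ C U := (hρ.k1 (pt U) (C U) (hCreg U)).mp h.symm
      have : pt U ∈ (U : Set X) ∩ C U := ⟨hpt U, this⟩
      rw [hdisj' U] at this
      exact this
  -- pigeonhole: some level set is infinite
  have hlev : ∃ m : ℕ, {U : T | 1 / (m + 1 : ℝ) < ρ (pt U) (C U)}.Infinite := by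
    by_contra hfin
    push_neg at hfin
    have hcov : (Set.univ : Set T) ⊆ ⋃ m : ℕ, {U : T | 1 / (m + 1 : ℝ) < ρ (pt U) (C U)} := by
      intro U _
      obtain ⟨m, hm⟩ := exists_nat_gt (1 / ρ (pt U) (C U))
      refine mem_iUnion.mpr ⟨m, ?_⟩
      have h0 := htpos U
      have : 1 / ρ (pt U) (C U) < m + 1 := by linarith
      calc (1 : ℝ) / (m + 1) < ρ (pt U) (C U) := by
            rw [div_lt_iff₀ (by positivity)]
            rw [div_lt_iff₀ h0] at this
            linarith
      _ = _ := rfl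
    have : (Set.univ : Set T).Countable :=
      (Set.countable_iUnion fun m => (hfin m).countable).mono hcov
    have : Countable T := Set.countable_univ_iff.mp this
    exact hunc (Set.countable_coe_iff.mpr this)
  obtain ⟨m, hm⟩ := hlev
  set ε : ℝ := 1 / (m + 1 : ℝ) with hε
  have hεpos : 0 < ε := by positivity
  set S : Set T := {U : T | ε < ρ (pt U) (C U)} with hS
  -- build an increasing (w.r.t. the well-order) sequence in S
  have hnext : ∀ F : Finset T, ∃ U ∈ S, U ∉ F := by
    intro F
    obtain ⟨U, hUS, hUF⟩ := (hm.diff F.finite_toSet).nonempty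
    exact ⟨U, hUS, hUF⟩
  have hSne : ∀ F : Finset T, (S \ ↑F).Nonempty := by
    intro F
    obtain ⟨U, hUS, hUF⟩ := hnext F
    exact ⟨U, hUS, hUF⟩
  set Fs : ℕ → Finset T := fun n => Nat.rec ∅
    (fun _ F => insert (wf.min (S \ ↑F) (hSne F)) F) n with hFs
  set u : ℕ → T := fun n => wf.min (S \ ↑(Fs n)) (hSne (Fs n)) with hu
  have hFsucc : ∀ n, Fs (n + 1) = insert (u n) (Fs n) := fun n => rfl
  have humem : ∀ n, u n ∈ S \ ↑(Fs n) := fun n => wf.min_mem _ (hSne (Fs n))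
  have hFmono : ∀ {i n : ℕ}, i ≤ n → Fs i ⊆ Fs n := by
    intro i n h
    induction n with
    | zero => simpa [Nat.le_zero.mp h]
    | succ n ih =>
      rcases Nat.lt_or_ge i (n + 1) with h' | h'
      · exact (ih (Nat.lt_succ_iff.mp h')).trans (by rw [hFsucc]; exact Finset.subset_insert _ _)
      · have : i = n + 1 := le_antisymm h h'
        subst this; rfl
  have huFs : ∀ i n, i < n → u i ∈ Fs n := by
    intro i n h
    have : u i ∈ Fs (i + 1) := by rw [hFsucc]; exact Finset.mem_insert_self _ _
    exact hFmono h this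
  have huinc : ∀ i n, i < n → r (u i) (u n) := by
    intro i n h
    have h1 : u n ∉ Fs n := (humem n).2
    have h2 : u n ≠ u i := fun hh => h1 (hh ▸ huFs i n h)
    have h3 : u n ∈ S \ ↑(Fs i) := ⟨(humem n).1, fun hh => h1 (hFmono h.le hh)⟩
    have h4 : ¬ r (u n) (u i) := wf.not_lt_min _ h3
    rcases trichotomous_of r (u i) (u n) with h' | h' | h'
    · exact h'
    · exact absurd h'.symm h2
    · exact absurd h' h4
  -- the increasing chain of regular closed sets
  set D : ℕ → Set X := fun n => closure (⋃ k ∈ Finset.range (n + 1), ((u k : T) : Set X))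
    with hD
  have hDopen : ∀ n, IsOpen (⋃ k ∈ Finset.range (n + 1), ((u k : T) : Set X)) :=
    fun n => isOpen_biUnion fun k _ => hopen _
  have hDreg : ∀ n, IsRegClosed (D n) := fun n => isRegClosed_closure (hDopen n)
  have hDmono : ∀ {i n : ℕ}, i ≤ n → D i ⊆ D n := by
    intro i n h
    apply closure_mono
    apply Set.iUnion₂_mono'
    intro k hk
    exact ⟨k, Finset.mem_range.mpr (lt_of_lt_of_le (Finset.mem_range.mp hk) (by omega)),
      subset_rfl⟩
  -- the key inequality
  have hkey : ∀ n, ε < ρ (pt (u (n + 1))) (D n) := by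
    intro n
    have h1 : D n ⊆ C (u (n + 1)) := by
      apply closure_mono
      intro y hy
      obtain ⟨k, hk1, hk2⟩ := mem_iUnion₂.mp hy
      exact mem_iUnion₂.mpr ⟨u k, huinc k (n + 1) (Finset.mem_range.mp hk1), hk2⟩
    have h2 := hρ.k2 (pt (u (n + 1))) _ _ (hDreg n) (hCreg (u (n + 1))) h1
    exact lt_of_lt_of_le (humem (n + 1)).1 h2
  -- the sequence of nonempty open sets
  set V : ℕ → Set X := fun n => ((u (n + 1) : T) : Set X) ∩ {y | ε < ρ y (D n)} with hV
  have hVo : ∀ n, IsOpen (V n) := by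
    intro n
    exact (hopen _).inter (isOpen_lt continuous_const (hρ.k3 _ (hDreg n)))
  have hVne : ∀ n, (V n).Nonempty := fun n => ⟨pt (u (n + 1)), hpt _, hkey n⟩
  obtain ⟨x, hx⟩ := cluster_point_of_opens hpc V hVo hVne
  -- x is in the closure of the union
  set E : Set X := closure (⋃ n, ((u n : T) : Set X)) with hE
  have hEreg : IsRegClosed E := isRegClosed_closure (isOpen_iUnion fun n => hopen _)
  have hxE : x ∈ E := by
    rw [mem_closure_iff]
    intro o ho hxo
    obtain ⟨n, _, y, hy1, hy2⟩ := hx o (ho.mem_nhds hxo) 0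
    exact ⟨y, hy1, mem_iUnion.mpr ⟨n + 1, hy2.1⟩⟩
  -- closure of union of the D's equals E
  have hED : closure (⋃ n, D n) = E := by
    apply subset_antisymm
    · apply closure_minimal _ isClosed_closure
      intro y hy
      obtain ⟨n, hn⟩ := mem_iUnion.mp hy
      have hsub : (⋃ k ∈ Finset.range (n + 1), ((u k : T) : Set X)) ⊆
          ⋃ j, ((u j : T) : Set X) := by
        intro z hz
        obtain ⟨k, _, hk2⟩ := mem_iUnion₂.mp hz
        exact mem_iUnion.mpr ⟨k, hk2⟩
      exact closure_mono hsub hn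
    · apply closure_mono
      intro y hy
      obtain ⟨n, hn⟩ := mem_iUnion.mp hy
      exact mem_iUnion.mpr ⟨n, subset_closure (mem_iUnion.mpr ⟨n, by simp [hn]⟩)⟩
  -- lower bound on ρ x (D k)
  have hlow : ∀ k, ε ≤ ρ x (D k) := by
    intro k
    by_contra hlt
    push_neg at hlt
    have hop : IsOpen {y | ρ y (D k) < ε} := isOpen_lt (hρ.k3 _ (hDreg k)) continuous_const
    obtain ⟨n, hn, y, hy1, hy2⟩ := hx _ (hop.mem_nhds hlt) k
    have h1 : ε < ρ y (D n) := hy2.2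
    have h2 : ρ y (D n) ≤ ρ y (D k) := hρ.k2 y _ _ (hDreg k) (hDreg n) (hDmono hn)
    have h3 : ρ y (D k) < ε := hy1
    linarith
  have h4 := hρ.k4omega D hDreg (fun n => hDmono (Nat.le_succ n)) x
  rw [hED] at h4
  have h5 : ε ≤ ρ x E := h4 ▸ le_ciInf hlow
  have h6 : ρ x E = 0 := (hρ.k1 x E hEreg).mpr hxE
  rw [h6] at h5
  linarith

end Aux

/-- βX of a pseudocompact countably κ-metrizable space X is
κ-metrizable, with κ-metric extending ρ. -/
theorem stmt18 {X : Type*} [TopologicalSpace X] [T35Space X]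
    (hpc : Pseudocompact X) (ρ : X → Set X → ℝ) (hρ : IsCountKappaMetric ρ) :
    ∃ ψ : StoneCech X → Set (StoneCech X) → ℝ, IsKappaMetric ψ ∧
      ∀ F' : Set (StoneCech X), IsRegClosed F' →
        ∀ x : X, ψ (stoneCechUnit x) F' = ρ x (stoneCechUnit ⁻¹' F') := by
  classical
  have hec : Continuous (stoneCechUnit : X → StoneCech X) := continuous_stoneCechUnit
  have hed : DenseRange (stoneCechUnit : X → StoneCech X) := denseRange_stoneCechUnit
  set e : X → StoneCech X := stoneCechUnit with he
  -- neighborhood basis property of the embedding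
  have hbasis : ∀ (x : X) (V : Set X), IsOpen V → x ∈ V →
      ∃ W : Set (StoneCech X), IsOpen W ∧ e x ∈ W ∧ e ⁻¹' W ⊆ V := by
    intro x V hV hxV
    obtain ⟨f, hfc, hfx, hfK⟩ := CompletelyRegularSpace.completely_regular x Vᶜ
      hV.isClosed_compl (by simp [hxV])
    let F := stoneCechExtend hfc
    refine ⟨(fun p => ((F p : unitInterval) : ℝ)) ⁻¹' Iio (1/2 : ℝ),
      (isOpen_Iio.preimage (continuous_subtype_val.comp (continuous_stoneCechExtend hfc))),
      ?_, ?_⟩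
    · have h1 : F (e x) = f x := congrFun (stoneCechExtend_extends hfc) x
      simp only [mem_preimage, mem_Iio, h1, hfx]
      norm_num
    · intro y hy
      by_contra hyV
      have h1 : F (e y) = f y := congrFun (stoneCechExtend_extends hfc) y
      have h2 : f y = 1 := hfK hyV
      simp only [mem_preimage, mem_Iio, h1, h2] at hy
      norm_num at hy
  -- preimage of closure of open is closure of preimage
  have hL1 : ∀ U : Set (StoneCech X), IsOpen U → e ⁻¹' (closure U) = closure (e ⁻¹' U) := by
    intro U hU
    apply subset_antisymm
    · intro x hx
      rw [mem_closure_iff]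
      intro V hV hxV
      obtain ⟨W, hWo, hxW, hWV⟩ := hbasis x V hV hxV
      have h1 : (W ∩ U).Nonempty := by
        rw [mem_preimage, mem_closure_iff] at hx
        exact hx W hWo hxW
      obtain ⟨a, ha⟩ := hed.exists_mem_open (hWo.inter hU) h1
      exact ⟨a, hWV ha.1, ha.2⟩
    · exact closure_minimal (preimage_mono subset_closure)
        (IsClosed.preimage hec isClosed_closure)
  -- preimages of regular closed sets are regular closed
  have hreg : ∀ F' : Set (StoneCech X), IsRegClosed F' → IsRegClosed (e ⁻¹' F') := by
    intro F' h
    have h1 : e ⁻¹' F' = closure (e ⁻¹' (interior F')) := by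
      rw [← hL1 _ isOpen_interior, h]
    rw [h1]
    exact isRegClosed_closure (isOpen_interior.preimage hec)
  -- transfer closed conditions from the dense image
  have dtrans : ∀ S : Set (StoneCech X), IsClosed S → (∀ x : X, e x ∈ S) → ∀ p, p ∈ S := by
    intro S hS hmem p
    have h1 : closure (Set.range e) ⊆ S :=
      closure_minimal (by rintro _ ⟨x, rfl⟩; exact hmem x) hS
    have h2 : closure (Set.range e) = univ := hed.closure_eq
    exact h1 (h2 ▸ mem_univ p)
  -- continuous bounded extension
  have key : ∀ F' : Set (StoneCech X), IsRegClosed F' →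
      ∃ L : StoneCech X → ℝ, Continuous L ∧ ∀ x : X, L (e x) = ρ x (e ⁻¹' F') := by
    intro F' hF'
    have hg : Continuous fun x => ρ x (e ⁻¹' F') := hρ.k3 _ (hreg F' hF')
    obtain ⟨M, hM⟩ := hpc _ hg
    have hmem : ∀ x : X, ρ x (e ⁻¹' F') ∈ Icc (-M) M := by
      intro x
      obtain ⟨h1, h2⟩ := abs_le.mp (hM x)
      exact ⟨h1, h2⟩
    let g : X → Icc (-M) M := fun x => ⟨ρ x (e ⁻¹' F'), hmem x⟩
    have hgc : Continuous g := Continuous.subtype_mk hg _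
    refine ⟨fun p => ((stoneCechExtend hgc p : Icc (-M) M) : ℝ),
      continuous_subtype_val.comp (continuous_stoneCechExtend hgc), fun x => ?_⟩
    have h1 := congrFun (stoneCechExtend_extends hgc) x
    exact congrArg Subtype.val h1
  choose L hLc hLe using key
  set ψ : StoneCech X → Set (StoneCech X) → ℝ :=
    fun p F' => if h : IsRegClosed F' then L F' h p else 0 with hψ
  have hψdef : ∀ (F' : Set (StoneCech X)) (h : IsRegClosed F') (p), ψ p F' = L F' h p := by
    intro F' h p
    simp only [hψ]
    rw [dif_pos h]
  have hψc : ∀ F', IsRegClosed F' → Continuous fun p => ψ p F' := by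
    intro F' h
    have h1 : (fun p => ψ p F') = L F' h := funext fun p => hψdef F' h p
    rw [h1]
    exact hLc F' h
  have hψe : ∀ (F' : Set (StoneCech X)) (h : IsRegClosed F') (x : X),
      ψ (e x) F' = ρ x (e ⁻¹' F') := fun F' h x => (hψdef F' h _).trans (hLe F' h x)
  -- nonnegativity
  have hψ_nonneg : ∀ (F' : Set (StoneCech X)), IsRegClosed F' → ∀ p, 0 ≤ ψ p F' := by
    intro F' h p
    refine dtrans {q | 0 ≤ ψ q F'} (isClosed_le continuous_const (hψc F' h)) (fun x => ?_) p
    simp only [mem_setOf_eq, hψe F' h x]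
    exact hρ.nonneg x _ (hreg F' h)
  -- monotonicity (K2)
  have hψ_k2 : ∀ (C D : Set (StoneCech X)), IsRegClosed C → IsRegClosed D → C ⊆ D →
      ∀ p, ψ p D ≤ ψ p C := by
    intro C D hC hD hCD p
    refine dtrans {q | ψ q D ≤ ψ q C} (isClosed_le (hψc D hD) (hψc C hC)) (fun x => ?_) p
    simp only [mem_setOf_eq, hψe C hC x, hψe D hD x]
    exact hρ.k2 x _ _ (hreg C hC) (hreg D hD) (preimage_mono hCD)
  -- K1, forward: vanishing on the set
  have hψ_zero : ∀ (F' : Set (StoneCech X)) (h : IsRegClosed F') (p), p ∈ F' → ψ p F' = 0 := by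
    intro F' h p hp
    have hcl : IsClosed {q | ψ q F' = 0} := isClosed_eq (hψc F' h) continuous_const
    have h1 : interior F' ∩ Set.range e ⊆ {q | ψ q F' = 0} := by
      rintro _ ⟨hq1, x, rfl⟩
      have h2 : x ∈ e ⁻¹' F' := mem_preimage.mpr (interior_subset hq1)
      have h3 := (hρ.k1 x (e ⁻¹' F') (hreg F' h)).mpr h2
      simp only [mem_setOf_eq]
      rw [hψe F' h x, h3]
    have h2 : F' ⊆ {q | ψ q F' = 0} := by
      have h3 := closure_minimal h1 hcl
      rwa [denseRange_closure_inter hed isOpen_interior, h] at h3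
    exact h2 hp
  -- K1, reverse: positivity off the set
  have hψ_pos : ∀ (F' : Set (StoneCech X)) (h : IsRegClosed F') (p), p ∉ F' → ψ p F' ≠ 0 := by
    intro F' hF' p hp hzero
    have hF'c : IsClosed F' := hF'.isClosed'
    obtain ⟨t, htm, htc, hts⟩ :=
      exists_mem_nhds_isClosed_subset (hF'c.isOpen_compl.mem_nhds hp)
    have hθc : Continuous fun q => ψ q F' := hψc F' hF'
    set A : ℕ → Set (StoneCech X) :=
      fun n => interior t ∩ {q | ψ q F' < (1/2 : ℝ)^n} with hA
    have hAo : ∀ n, IsOpen (A n) :=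
      fun n => isOpen_interior.inter (isOpen_lt hθc continuous_const)
    have hAne : ∀ n, (A n).Nonempty := by
      intro n
      refine ⟨p, mem_interior_iff_mem_nhds.mpr htm, ?_⟩
      simp only [mem_setOf_eq, hzero]
      positivity
    set V : ℕ → Set X := fun n => e ⁻¹' (A n) with hV
    have hVne : ∀ n, (V n).Nonempty := by
      intro n
      obtain ⟨a, ha⟩ := hed.exists_mem_open (hAo n) (hAne n)
      exact ⟨a, ha⟩
    obtain ⟨x, hx⟩ := cluster_point_of_opens hpc V (fun n => (hAo n).preimage hec) hVne
    set F : Set X := e ⁻¹' F' with hF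
    have hFreg : IsRegClosed F := hreg F' hF'
    have hg0 : ρ x F = 0 := by
      by_contra hne
      have hpos : 0 < ρ x F := lt_of_le_of_ne (hρ.nonneg x F hFreg) (Ne.symm hne)
      have hop : IsOpen {y : X | ρ x F / 2 < ρ y F} :=
        isOpen_lt continuous_const (hρ.k3 F hFreg)
      obtain ⟨k, hk⟩ := exists_pow_lt_of_lt_one (half_pos hpos) (by norm_num : (1/2 : ℝ) < 1)
      obtain ⟨n, hn, y, hy1, hy2⟩ := hx _ (hop.mem_nhds (half_lt_self hpos)) k
      have h1 : ψ (e y) F' < (1/2 : ℝ)^n := hy2.2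
      rw [hψe F' hF' y] at h1
      have h2 : ((1:ℝ)/2)^n ≤ (1/2)^k :=
        pow_le_pow_of_le_one (by norm_num) (by norm_num) hn
      have h3 : ρ x F / 2 < ρ y F := hy1
      rw [← hF] at h1
      linarith
    have hxf : x ∈ F := (hρ.k1 x F hFreg).mp hg0
    have hxt : x ∈ e ⁻¹' t := by
      have hcl : IsClosed (e ⁻¹' t) := htc.preimage hec
      rw [← hcl.closure_eq, mem_closure_iff]
      intro o ho hxo
      obtain ⟨n, -, y, hy1, hy2⟩ := hx o (ho.mem_nhds hxo) 0
      exact ⟨y, hy1, mem_preimage.mpr (interior_subset hy2.1)⟩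
    exact hts hxt hxf
  -- K4ω for ψ
  have hψ_k4o : ∀ Cn : ℕ → Set (StoneCech X), (∀ n, IsRegClosed (Cn n)) →
      (∀ n, Cn n ⊆ Cn (n + 1)) → ∀ p,
      ψ p (closure (⋃ n, Cn n)) = ⨅ n, ψ p (Cn n) := by
    intro Cn hCreg hCmono p
    have hCmono' : ∀ {i j : ℕ}, i ≤ j → Cn i ⊆ Cn j := fun {i j} h =>
      monotone_nat_of_le_succ hCmono h
    set U : Set (StoneCech X) := ⋃ n, interior (Cn n) with hU
    have hUo : IsOpen U := isOpen_iUnion fun n => isOpen_interior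
    have hCl : closure (⋃ n, Cn n) = closure U := by
      apply subset_antisymm
      · apply closure_minimal _ isClosed_closure
        intro y hy
        obtain ⟨n, hn⟩ := mem_iUnion.mp hy
        have h1 : y ∈ closure (interior (Cn n)) := by rw [hCreg n]; exact hn
        exact closure_mono (subset_iUnion (fun n => interior (Cn n)) n) h1
      · exact closure_mono (iUnion_mono fun n => interior_subset)
    set C' : Set (StoneCech X) := closure (⋃ n, Cn n) with hC'
    have hC'reg : IsRegClosed C' := by
      rw [hCl]
      exact isRegClosed_closure hUo
    have hsub : ∀ n, Cn n ⊆ C' := fun n => (subset_iUnion Cn n).trans subset_closure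
    have hFeq : e ⁻¹' C' = closure (⋃ n, e ⁻¹' (Cn n)) := by
      rw [hCl, hL1 U hUo]
      apply subset_antisymm
      · apply closure_mono
        rw [hU, preimage_iUnion]
        exact iUnion_mono fun n => preimage_mono interior_subset
      · apply closure_minimal _ isClosed_closure
        intro y hy
        obtain ⟨n, hn⟩ := mem_iUnion.mp hy
        have h1 : y ∈ e ⁻¹' closure (interior (Cn n)) := by rw [hCreg n]; exact hn
        rw [hL1 _ isOpen_interior] at h1
        refine closure_mono (preimage_mono ?_) h1
        exact subset_iUnion (fun n => interior (Cn n)) n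
    have hρ4 := hρ.k4omega (fun n => e ⁻¹' (Cn n)) (fun n => hreg _ (hCreg n))
      (fun n => preimage_mono (hCmono n))
    have hbdd : BddBelow (Set.range fun n => ψ p (Cn n)) := by
      refine ⟨0, ?_⟩
      rintro _ ⟨n, rfl⟩
      exact hψ_nonneg _ (hCreg n) _
    refine le_antisymm (le_ciInf fun n => hψ_k2 _ _ (hCreg n) hC'reg (hsub n) p) ?_
    by_contra hlt
    push_neg at hlt
    set c : ℝ := ψ p C' with hc
    set I : ℝ := ⨅ n, ψ p (Cn n) with hI
    set δ : ℝ := I - c with hδ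
    have hδpos : 0 < δ := sub_pos.mpr hlt
    have hN : IsOpen {q | ψ q C' < c + δ/4} := isOpen_lt (hψc _ hC'reg) continuous_const
    have hpN : p ∈ {q | ψ q C' < c + δ/4} := by
      simp only [mem_setOf_eq, ← hc]
      linarith
    have hO : ∀ n, IsOpen {q | c + δ/2 < ψ q (Cn n)} :=
      fun n => isOpen_lt continuous_const (hψc _ (hCreg n))
    have hpO : ∀ n, p ∈ {q | c + δ/2 < ψ q (Cn n)} := by
      intro n
      have h1 : I ≤ ψ p (Cn n) := ciInf_le hbdd n
      simp only [mem_setOf_eq]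
      linarith
    set V : ℕ → Set X :=
      fun n => e ⁻¹' ({q | ψ q C' < c + δ/4} ∩ {q | c + δ/2 < ψ q (Cn n)}) with hV
    have hVo : ∀ n, IsOpen (V n) := fun n => (hN.inter (hO n)).preimage hec
    have hVne : ∀ n, (V n).Nonempty := by
      intro n
      obtain ⟨a, ha⟩ := hed.exists_mem_open (hN.inter (hO n)) ⟨p, hpN, hpO n⟩
      exact ⟨a, ha⟩
    obtain ⟨x, hx⟩ := cluster_point_of_opens hpc V hVo hVne
    have hlow : ∀ k, c + δ/2 ≤ ρ x (e ⁻¹' (Cn k)) := by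
      intro k
      by_contra h
      push_neg at h
      have hop : IsOpen {y : X | ρ y (e ⁻¹' (Cn k)) < c + δ/2} :=
        isOpen_lt (hρ.k3 _ (hreg _ (hCreg k))) continuous_const
      obtain ⟨n, hn, y, hy1, hy2⟩ := hx _ (hop.mem_nhds h) k
      have h1 : c + δ/2 < ψ (e y) (Cn n) := hy2.2
      rw [hψe _ (hCreg n) y] at h1
      have h2 : ρ y (e ⁻¹' (Cn n)) ≤ ρ y (e ⁻¹' (Cn k)) :=
        hρ.k2 y _ _ (hreg _ (hCreg k)) (hreg _ (hCreg n)) (preimage_mono (hCmono' hn))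
      have h3 : ρ y (e ⁻¹' (Cn k)) < c + δ/2 := hy1
      linarith
    have hup : ρ x (e ⁻¹' C') ≤ c + δ/4 := by
      by_contra h
      push_neg at h
      have hop : IsOpen {y : X | c + δ/4 < ρ y (e ⁻¹' C')} :=
        isOpen_lt continuous_const (hρ.k3 _ (hreg _ hC'reg))
      obtain ⟨n, -, y, hy1, hy2⟩ := hx _ (hop.mem_nhds h) 0
      have h1 : ψ (e y) C' < c + δ/4 := hy2.1
      rw [hψe _ hC'reg y] at h1
      have h2 : c + δ/4 < ρ y (e ⁻¹' C') := hy1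
      linarith
    have hinf : ρ x (e ⁻¹' C') = ⨅ n, ρ x (e ⁻¹' (Cn n)) := by
      rw [hFeq]
      exact hρ4 x
    have h5 : c + δ/2 ≤ ρ x (e ⁻¹' C') := by
      rw [hinf]
      exact le_ciInf hlow
    linarith
  -- ccc for the Stone–Čech compactification
  have hcccX : CCCSpace X := ccc_of_pseudocompact hpc ρ hρ
  have hcccβ : ∀ 𝒪 : Set (Set (StoneCech X)), (∀ U ∈ 𝒪, IsOpen U ∧ U.Nonempty) →
      𝒪.PairwiseDisjoint id → 𝒪.Countable := by
    intro 𝒪 h1 h2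
    have hne' : ∀ O ∈ 𝒪, (e ⁻¹' O).Nonempty := by
      intro O hO
      obtain ⟨a, ha⟩ := hed.exists_mem_open (h1 O hO).1 (h1 O hO).2
      exact ⟨a, ha⟩
    have hinj : Set.InjOn (fun O => e ⁻¹' O) 𝒪 := by
      intro A hA B hB hAB
      by_contra hne
      have hd : Disjoint A B := h2 hA hB hne
      obtain ⟨a, ha⟩ := hne' A hA
      have hAB' : e ⁻¹' A = e ⁻¹' B := hAB
      have haB : a ∈ e ⁻¹' B := hAB' ▸ ha
      exact Set.disjoint_left.mp hd ha haB
    apply Set.countable_of_injective_of_countable_image hinj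
    apply hcccX
    · rintro _ ⟨O, hO, rfl⟩
      exact ⟨(h1 O hO).1.preimage hec, hne' O hO⟩
    · rintro _ ⟨A, hA, rfl⟩ _ ⟨B, hB, rfl⟩ hne
      have hAB : A ≠ B := fun h => hne (by rw [h])
      exact Disjoint.preimage e (h2 hA hB hAB)
  -- full K4 on chains
  have hk4 : K4Chains ψ := by
    intro 𝒞 h𝒞ne h𝒞reg h𝒞chain p
    set C' : Set (StoneCech X) := closure (⋃₀ 𝒞) with hC'
    have hUeq : closure (⋃₀ 𝒞) =
        closure (⋃ C : ↥𝒞, interior ((C : Set (StoneCech X)))) := by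
      apply subset_antisymm
      · apply closure_minimal _ isClosed_closure
        rintro y ⟨Cs, hCs, hyC⟩
        have h1 : y ∈ closure (interior Cs) := by rw [h𝒞reg Cs hCs]; exact hyC
        exact closure_mono
          (subset_iUnion (fun C : ↥𝒞 => interior ((C : Set (StoneCech X)))) ⟨Cs, hCs⟩) h1
      · apply closure_minimal _ isClosed_closure
        intro y hy
        obtain ⟨C, hC⟩ := mem_iUnion.mp hy
        exact subset_closure ⟨C, C.2, interior_subset hC⟩
    have hC'reg : IsRegClosed C' := by
      rw [hC', hUeq]
      exact isRegClosed_closure (isOpen_iUnion fun C => isOpen_interior)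
    have hsub : ∀ C ∈ 𝒞, C ⊆ C' := fun C hC =>
      (subset_sUnion_of_mem hC).trans subset_closure
    have hne' : ((ψ p) '' 𝒞).Nonempty := h𝒞ne.image _
    have hbdd : BddBelow ((ψ p) '' 𝒞) := by
      refine ⟨ψ p C', ?_⟩
      rintro _ ⟨C, hC, rfl⟩
      exact hψ_k2 _ _ (h𝒞reg C hC) hC'reg (hsub C hC) p
    refine le_antisymm (le_csInf hne' ?_) ?_
    · rintro b ⟨C, hC, rfl⟩
      exact hψ_k2 _ _ (h𝒞reg C hC) hC'reg (hsub C hC) p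
    -- maximal disjoint family
    set 𝔄 : Set (Set (Set (StoneCech X))) :=
      {𝒰 | (∀ U ∈ 𝒰, IsOpen U ∧ U.Nonempty ∧ ∃ C ∈ 𝒞, U ⊆ interior C) ∧
        𝒰.PairwiseDisjoint id} with h𝔄
    have hzorn : ∀ c ⊆ 𝔄, IsChain (· ⊆ ·) c → c.Nonempty →
        ∃ ub ∈ 𝔄, ∀ s ∈ c, s ⊆ ub := by
      intro c hc hchain _
      refine ⟨⋃₀ c, ⟨?_, ?_⟩, fun s hs => subset_sUnion_of_mem hs⟩
      · rintro U ⟨s, hs, hUs⟩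
        exact (hc hs).1 U hUs
      · intro A hA B hB hAB
        obtain ⟨s, hs, hAs⟩ := hA
        obtain ⟨t, ht, hBt⟩ := hB
        rcases hchain.total hs ht with h | h
        · exact (hc ht).2 (h hAs) hBt hAB
        · exact (hc hs).2 hAs (h hBt) hAB
    obtain ⟨𝒰, -, h𝒰max⟩ := zorn_subset_nonempty 𝔄 hzorn ∅
      ⟨by simp, Set.pairwiseDisjoint_empty⟩
    have h𝒰 : 𝒰 ∈ 𝔄 := h𝒰max.1
    have h𝒰cnt : 𝒰.Countable :=
      hcccβ 𝒰 (fun U hU => ⟨(h𝒰.1 U hU).1, (h𝒰.1 U hU).2.1⟩) h𝒰.2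
    -- maximality: the union of 𝒰 is dense in the union of interiors
    have hdense : (⋃ C : ↥𝒞, interior ((C : Set (StoneCech X)))) ⊆ closure (⋃₀ 𝒰) := by
      intro y hy
      obtain ⟨C0, hyC0⟩ := mem_iUnion.mp hy
      rw [mem_closure_iff]
      intro o ho hyo
      by_contra hem
      rw [not_nonempty_iff_eq_empty] at hem
      set U' : Set (StoneCech X) := o ∩ interior ((C0 : Set (StoneCech X))) with hU'
      have hU'o : IsOpen U' := ho.inter isOpen_interior
      have hU'ne : U'.Nonempty := ⟨y, hyo, hyC0⟩
      have hU'disj : ∀ B ∈ 𝒰, Disjoint U' B := by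
        intro B hB
        rw [Set.disjoint_left]
        intro a haU' haB
        have h1 : a ∈ o ∩ ⋃₀ 𝒰 := ⟨haU'.1, B, hB, haB⟩
        rw [hem] at h1
        exact h1
      have hmem : insert U' 𝒰 ∈ 𝔄 := by
        constructor
        · rintro U (rfl | hU)
          · exact ⟨hU'o, hU'ne, C0, C0.2, inter_subset_right⟩
          · exact h𝒰.1 U hU
        · refine h𝒰.2.insert ?_
          intro B hB _
          exact hU'disj B hB
      have h1 : insert U' 𝒰 ⊆ 𝒰 := h𝒰max.2 hmem (subset_insert U' 𝒰)
      have h2 : U' ∈ 𝒰 := h1 (mem_insert U' 𝒰)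
      obtain ⟨a, ha⟩ := hU'ne
      exact Set.disjoint_left.mp (hU'disj U' h2) ha ha
    rcases Set.eq_empty_or_nonempty 𝒰 with h𝒰e | h𝒰ne
    · -- all members of the chain are empty
      have hCe : ∀ C ∈ 𝒞, C = ∅ := by
        intro C hC
        have h1 : interior C ⊆ closure (⋃₀ 𝒰) :=
          (subset_iUnion (fun C : ↥𝒞 => interior ((C : Set (StoneCech X))))
            (⟨C, hC⟩ : ↥𝒞)).trans hdense
        rw [h𝒰e] at h1
        simp only [sUnion_empty, closure_empty] at h1
        have h2 : interior C = ∅ := subset_empty_iff.mp h1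
        have h3 : closure (interior C) = C := h𝒞reg C hC
        rw [h2, closure_empty] at h3
        exact h3.symm
      obtain ⟨C0, hC0⟩ := h𝒞ne
      have hC'e : C' = ∅ := by
        rw [hC']
        have h1 : ⋃₀ 𝒞 = ∅ := by
          apply subset_empty_iff.mp
          rintro y ⟨C, hC, hyC⟩
          rw [hCe C hC] at hyC
          exact hyC
        rw [h1, closure_empty]
      have himg : (ψ p) '' 𝒞 = {ψ p C'} := by
        apply subset_antisymm
        · rintro _ ⟨C, hC, rfl⟩
          rw [hCe C hC, ← hC'e]
          rfl
        · rintro b hb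
          rw [mem_singleton_iff] at hb
          exact ⟨C0, hC0, by rw [hCe C0 hC0, ← hC'e, hb]⟩
      rw [himg, csInf_singleton]
    · -- enumerate 𝒰 and extract an increasing sequence from the chain
      obtain ⟨uSeq, huSeq⟩ := h𝒰cnt.exists_eq_range h𝒰ne
      have huprop : ∀ n, IsOpen (uSeq n) ∧ (uSeq n).Nonempty ∧
          ∃ C ∈ 𝒞, uSeq n ⊆ interior C := by
        intro n
        apply h𝒰.1
        rw [huSeq]
        exact ⟨n, rfl⟩
      choose CU hCU1 hCU2 using fun n => (huprop n).2.2
      set E : ℕ → Set (StoneCech X) := fun n => Nat.rec (CU 0)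
        (fun m Em => if Em ⊆ CU (m + 1) then CU (m + 1) else Em) n with hE
      have hEsucc : ∀ n, E (n + 1) = if E n ⊆ CU (n + 1) then CU (n + 1) else E n :=
        fun n => rfl
      have hE𝒞 : ∀ n, E n ∈ 𝒞 := by
        intro n
        induction n with
        | zero => exact hCU1 0
        | succ n ih =>
          rw [hEsucc]
          split
          · exact hCU1 (n + 1)
          · exact ih
      have hEmono : ∀ n, E n ⊆ E (n + 1) := by
        intro n
        rw [hEsucc]
        split
        · assumption
        · exact subset_rfl
      have hEmono' : ∀ {i j : ℕ}, i ≤ j → E i ⊆ E j := fun {i j} h =>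
        monotone_nat_of_le_succ hEmono h
      have hCUE : ∀ n, CU n ⊆ E n := by
        intro n
        cases n with
        | zero => exact subset_rfl
        | succ n =>
          rw [hEsucc]
          split
          · exact subset_rfl
          · rename_i hcase
            rcases h𝒞chain (E n) (hE𝒞 n) (CU (n + 1)) (hCU1 (n + 1)) with h | h
            · exact absurd h hcase
            · exact h
      have hEC' : closure (⋃ n, E n) = C' := by
        apply subset_antisymm
        · apply closure_minimal _ hC'reg.isClosed'
          intro y hy
          obtain ⟨n, hn⟩ := mem_iUnion.mp hy
          exact hsub (E n) (hE𝒞 n) hn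
        · rw [hC', hUeq]
          apply closure_minimal _ isClosed_closure
          intro y hy
          have h1 : y ∈ closure (⋃₀ 𝒰) := hdense hy
          refine closure_mono ?_ h1
          rintro z ⟨Uz, hUz, hzU⟩
          rw [huSeq] at hUz
          obtain ⟨n, rfl⟩ := hUz
          exact mem_iUnion.mpr ⟨n, hCUE n ((hCU2 n).trans interior_subset hzU)⟩
      have h4o := hψ_k4o E (fun n => h𝒞reg _ (hE𝒞 n)) hEmono p
      rw [hEC'] at h4o
      rw [h4o]
      apply le_ciInf
      intro n
      exact csInf_le hbdd ⟨E n, hE𝒞 n, rfl⟩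
  -- assemble
  refine ⟨ψ, ⟨⟨fun q C hC => hψ_nonneg C hC q,
    fun q C hC => ⟨fun hz => by_contra fun hn => hψ_pos C hC q hn hz,
      fun hq => hψ_zero C hC q hq⟩,
    fun q C D hC hD hCD => hψ_k2 C D hC hD hCD q,
    fun C hC => hψc C hC,
    hψ_k4o⟩, hk4⟩, fun F' hF' x => hψe F' hF' x⟩
end

section
/- Let f : X → Y be a continuous surjection. Then f is d-open if and only if there exists a base B_Y for the topology of Y such that the family P = {f^{-1}(V) : V ∈ B_Y} has the property: for every subfamily S ⊆ P and every x ∉ cl_X ⋃S, there exists W ∈ P with x ∈ W and W ∩ ⋃S = ∅. -/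
open Set Topology

/-!
If `f` is d-open, the preimages of all open sets work: for `x ∉ cl ⋃S` put `U = X ∖ cl ⋃S`;
then `W = f⁻¹(int cl f[U])` contains `x`, and an open `V` with `f⁻¹V ∩ U = ∅` misses `f[U]`,
hence its closure, hence `W`. Conversely, given `x ∈ U` open, apply the property to the members
of `P` missing `U`; the resulting `W = f⁻¹V₀` forces `V₀ ⊆ cl f[U]`, since a basic set inside
`V₀ ∖ cl f[U]` would, by surjectivity, give a nonempty member of that family inside `W`.
-/

section DOpen

variable {X Y : Type*} [TopologicalSpace Y] {f : X → Y}

lemma disjoint_preimage_interior_closure_image {V : Set Y} (hV : IsOpen V) {U : Set X}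
    (h : Disjoint (f ⁻¹' V) U) : Disjoint (f ⁻¹' V) (f ⁻¹' interior (closure (f '' U))) :=
  (((disjoint_image_left.2 h.symm).symm.closure_right hV).mono_right interior_subset).preimage f

theorem IsDOpen.exists_preimage_open_disjoint_sUnion [TopologicalSpace X] (hd : IsDOpen f)
    {S : Set (Set X)} (hS : S ⊆ (fun V => f ⁻¹' V) '' {V : Set Y | IsOpen V}) {x : X}
    (hx : x ∉ closure (⋃₀ S)) :
    ∃ W ∈ (fun V => f ⁻¹' V) '' {V : Set Y | IsOpen V}, x ∈ W ∧ W ∩ ⋃₀ S = ∅ := by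
  set U := (closure (⋃₀ S))ᶜ
  refine ⟨_, ⟨interior (closure (f '' U)), isOpen_interior, rfl⟩,
    hd U isClosed_closure.isOpen_compl ⟨x, hx, rfl⟩, ?_⟩
  refine disjoint_iff_inter_eq_empty.1 (disjoint_sUnion_right.2 fun T hT => ?_)
  obtain ⟨V, hV, rfl⟩ := hS hT
  exact (disjoint_preimage_interior_closure_image hV
    (disjoint_compl_right.mono_left ((subset_sUnion_of_mem hT).trans subset_closure))).symm

lemma TopologicalSpace.IsTopologicalBasis.exists_nonempty_subset_disjoint {B : Set (Set Y)}
    (hB : IsTopologicalBasis B) {V A : Set Y} (hV : IsOpen V) (h : ¬V ⊆ closure A) :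
    ∃ V₁ ∈ B, V₁.Nonempty ∧ V₁ ⊆ V ∧ Disjoint V₁ A := by
  obtain ⟨y, hyV, hyA⟩ := not_subset.1 h
  obtain ⟨V₁, hV₁, hyV₁, hV₁sub⟩ := hB.exists_subset_of_mem_open
    (show y ∈ V ∩ (closure A)ᶜ from ⟨hyV, hyA⟩) (hV.inter isClosed_closure.isOpen_compl)
  exact ⟨V₁, hV₁, ⟨y, hyV₁⟩, hV₁sub.trans inter_subset_left,
    disjoint_compl_left.mono (hV₁sub.trans inter_subset_right) subset_closure⟩

theorem isDOpen_of_isTopologicalBasis [TopologicalSpace X] (hsurj : Function.Surjective f)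
    {B : Set (Set Y)} (hB : TopologicalSpace.IsTopologicalBasis B)
    (hP : ∀ S ⊆ (fun V => f ⁻¹' V) '' B, ∀ x ∉ closure (⋃₀ S),
      ∃ W ∈ (fun V => f ⁻¹' V) '' B, x ∈ W ∧ W ∩ ⋃₀ S = ∅) :
    IsDOpen f := by
  rintro U hU _ ⟨x, hxU, rfl⟩
  set S := (fun V => f ⁻¹' V) '' {V ∈ B | Disjoint (f ⁻¹' V) U}
  have hSU : closure (⋃₀ S) ⊆ Uᶜ :=
    closure_minimal (sUnion_subset fun _ ⟨_, ⟨_, hV⟩, hT⟩ => hT ▸ hV.subset_compl_right)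
      hU.isClosed_compl
  obtain ⟨_, ⟨V₀, hV₀, rfl⟩, hxV₀, hV₀S⟩ :=
    hP S (image_mono fun _ hV => hV.1) x fun h => hSU h hxU
  have hV₀U : V₀ ⊆ closure (f '' U) := by
    by_contra h
    obtain ⟨V₁, hV₁, hne, hsub, hdisj⟩ := hB.exists_nonempty_subset_disjoint (hB.isOpen hV₀) h
    obtain ⟨x', hx'⟩ := hne.preimage hsurj
    exact disjoint_left.1 (disjoint_iff_inter_eq_empty.2 hV₀S) (hsub hx')
      ⟨_, ⟨V₁, ⟨hV₁, (disjoint_image_left.1 hdisj.symm).symm⟩, rfl⟩, hx'⟩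
  exact interior_maximal hV₀U (hB.isOpen hV₀) hxV₀

end DOpen

theorem stmt19_general {X Y : Type*} [TopologicalSpace X] [TopologicalSpace Y]
    (f : X → Y) (hsurj : Function.Surjective f) :
    IsDOpen f ↔ ∃ B : Set (Set Y), TopologicalSpace.IsTopologicalBasis B ∧
      ∀ S ⊆ (fun V => f ⁻¹' V) '' B, ∀ x ∉ closure (⋃₀ S),
        ∃ W ∈ (fun V => f ⁻¹' V) '' B, x ∈ W ∧ W ∩ ⋃₀ S = ∅ :=
  ⟨fun hd => ⟨_, TopologicalSpace.isTopologicalBasis_opens,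
      fun _ hS _ hx => hd.exists_preimage_open_disjoint_sUnion hS hx⟩,
    fun ⟨_, hB, hP⟩ => isDOpen_of_isTopologicalBasis hsurj hB hP⟩

/-- Tkachenko's characterization of d-open maps. -/
theorem stmt19 {X Y : Type*} [TopologicalSpace X] [TopologicalSpace Y]
    (f : X → Y) (hf : Continuous f) (hsurj : Function.Surjective f) :
    IsDOpen f ↔ ∃ B : Set (Set Y), TopologicalSpace.IsTopologicalBasis B ∧
      ∀ S ⊆ (fun V => f ⁻¹' V) '' B, ∀ x ∉ closure (⋃₀ S),
        ∃ W ∈ (fun V => f ⁻¹' V) '' B, x ∈ W ∧ W ∩ ⋃₀ S = ∅ :=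
  stmt19_general f hsurj
end
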